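/- Let G be a cograph with cotree T, x a new vertex with completed neighbourhood N'(x) of size d' in some constrained cograph completion H of G+x with insertion node u. Then the number of non-hollow nodes of T (nodes v with V(v) ∩ N(x) ≠ ∅) is O(d'). -/

import Mathlib

universe u

def IsCograph {α : Type*} (G : SimpleGraph α) : Prop :=
  ¬ ∃ f : Fin 4 → α, Function.Injective f ∧
      ∀ i j : Fin 4, G.Adj (f i) (f j) ↔ (i.val + 1 = j.val ∨ j.val + 1 = i.val)

inductive Cotree (V : Type u) : Type u where
  | leaf : V → Cotree V
  | node : Bool → List (Cotree V) → Cotree V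

namespace Cotree

variable {V : Type u}

def leaves : Cotree V → List V
  | .leaf v => [v]
  | .node _ ts => ts.attach.flatMap (fun t => t.1.leaves)

decreasing_by simp_wf; have := List.sizeOf_lt_of_mem t.2; omega

def subtrees : Cotree V → List (Cotree V)
  | .leaf v => [.leaf v]
  | .node b ts => .node b ts :: ts.attach.flatMap (fun t => t.1.subtrees)

decreasing_by simp_wf; have := List.sizeOf_lt_of_mem t.2; omega

def children : Cotree V → List (Cotree V)
  | .leaf _ => []
  | .node _ ts => ts

def isSeries : Cotree V → Prop
  | .node true _ => True
  | _ => False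

def isParallel : Cotree V → Prop
  | .node false _ => True
  | _ => False

def adj : Cotree V → V → V → Prop
  | .leaf _, _, _ => False
  | .node b ts, x, y =>
      (∃ t ∈ ts.attach, adj t.1 x y) ∨
      (b = true ∧ ∃ t ∈ ts.attach, ∃ s ∈ ts.attach,
        t.1 ≠ s.1 ∧ x ∈ t.1.leaves ∧ y ∈ s.1.leaves)

decreasing_by simp_wf; have := List.sizeOf_lt_of_mem t.2; omega

def valid : Cotree V → Prop
  | .leaf _ => True
  | .node b ts => 2 ≤ ts.length ∧ ∀ t ∈ ts.attach, valid t.1 ∧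
      ∀ b' ts', t.1 = .node b' ts' → b' ≠ b

decreasing_by simp_wf; have := List.sizeOf_lt_of_mem t.2; omega

def hollow (N : Set V) (t : Cotree V) : Prop := ∀ v ∈ t.leaves, v ∉ N
def full (N : Set V) (t : Cotree V) : Prop := ∀ v ∈ t.leaves, v ∈ N
def uniform (N : Set V) (t : Cotree V) : Prop := full N t ∨ hollow N t
def mixed (N : Set V) (t : Cotree V) : Prop := ¬ uniform N t

def forced (N : Set V) : Cotree V → Prop
  | .leaf v => v ∈ N
  | .node b ts =>
      full N (.node b ts) ∨
      (b = false ∧ ∀ t ∈ ts, ¬ hollow N t) ∨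
      (b = true ∧ ∀ t ∈ ts.attach, forced N t.1)

decreasing_by simp_wf; have := List.sizeOf_lt_of_mem t.2; omega

def eligible (N : Set V) : Cotree V → Cotree V → Prop
  | .leaf v, u => u = .leaf v
  | .node b ts, u => u = .node b ts ∨
      ∃ t ∈ ts.attach, eligible N t.1 u ∧
        (b = false → ∀ s ∈ ts, s ≠ t.1 → hollow N s)

decreasing_by simp_wf; have := List.sizeOf_lt_of_mem t.2; omega

def IsLcaLeaves (T u : Cotree V) (x y : V) : Prop :=
  u ∈ T.subtrees ∧ x ∈ u.leaves ∧ y ∈ u.leaves ∧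
    ∀ c ∈ u.children, ¬ (x ∈ c.leaves ∧ y ∈ c.leaves)

def IsLcaNodeLeaf (T w u : Cotree V) (y : V) : Prop :=
  w ∈ T.subtrees ∧ u ∈ w.subtrees ∧ y ∈ w.leaves ∧
    ∀ c ∈ w.children, ¬ (u ∈ c.subtrees ∧ y ∈ c.leaves)

def graphOf (T : Cotree V) : SimpleGraph V :=
  SimpleGraph.fromRel (fun a b => T.adj a b)

def graphPlus (T : Cotree V) (N : Set V) : SimpleGraph (Option V) :=
  SimpleGraph.fromRel (fun a b =>
    match a, b with
    | some u, some v => T.adj u v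
    | none, some v => v ∈ N
    | _, _ => False)

def IsConstrainedCompletion (T : Cotree V) (Nx N' : Set V) : Prop :=
  Nx ⊆ N' ∧ (∀ v ∈ N', v ∈ T.leaves) ∧ IsCograph (graphPlus T N')

def IsMinimalConstrainedCompletion (T : Cotree V) (Nx N' : Set V) : Prop :=
  IsConstrainedCompletion T Nx N' ∧
    ∀ N'' ⊆ N', IsConstrainedCompletion T Nx N'' → N'' = N'

def IsInsertionNode (T : Cotree V) (N' : Set V) (u : Cotree V) : Prop :=
  u ∈ T.subtrees ∧ mixed N' u ∧ (∀ c ∈ u.children, uniform N' c) ∧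
    ∀ y ∈ T.leaves, y ∉ u.leaves →
      (y ∈ N' ↔ ∃ w, IsLcaNodeLeaf T w u y ∧ w.isSeries)

def IsCMInsertionNode (T : Cotree V) (Nx : Set V) (u : Cotree V) : Prop :=
  ∃ N', IsMinimalConstrainedCompletion T Nx N' ∧ IsInsertionNode T N' u

def anchored (T u : Cotree V) (Nx : Set V) : Set V :=
  Nx ∪ {y | y ∈ T.leaves ∧ y ∉ u.leaves ∧ ∃ w, IsLcaNodeLeaf T w u y ∧ w.isSeries}
     ∪ {y | ∃ c ∈ u.children, ¬ hollow Nx c ∧ y ∈ c.leaves}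

end Cotree

/-! A node that is not hollow for `N(x) ⊆ N'(x)` is either an ancestor of the insertion node `u`
or filled (all its leaves lie in `N'(x)`). The filled nodes of a tree whose internal nodes have at
least two children number fewer than twice their leaves, so fewer than `2d'`. On the path from `u`
to the root the labels alternate, so at most every other ancestor is parallel, and every series
ancestor has a child off the path whose leaves lie in `N'(x)`; hence there are at most `2d' + 2`
ancestors. As `d' ≥ 1`, at most `5d'` nodes are not hollow. -/

namespace List
variable {α : Type*}

theorem finite_setOf_mem_and (l : List α) (p : α → Prop) : {a | a ∈ l ∧ p a}.Finite :=
  (finite_toSet l).subset fun _ ha => ha.1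

theorem setOf_mem_and_eq_coe_toFinset_filter [DecidableEq α] (l : List α) (p : α → Prop)
    [DecidablePred p] : {a | a ∈ l ∧ p a} = ↑(l.filter (p ·)).toFinset := by
  ext; simp

theorem ncard_setOf_mem_and_le_countP (l : List α) (p : α → Prop) [DecidablePred p] :
    {a | a ∈ l ∧ p a}.ncard ≤ l.countP (p ·) := by
  classical
  rw [setOf_mem_and_eq_coe_toFinset_filter, Set.ncard_coe_finset, countP_eq_length_filter]
  exact toFinset_card_le _

theorem Nodup.ncard_setOf_mem_and {l : List α} (hl : l.Nodup) (p : α → Prop)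
    [DecidablePred p] : {a | a ∈ l ∧ p a}.ncard = l.countP (p ·) := by
  classical
  rw [setOf_mem_and_eq_coe_toFinset_filter, Set.ncard_coe_finset, countP_eq_length_filter]
  exact toFinset_card_of_nodup (hl.filter _)

theorem sum_map_eq_zero_or_lt {ι : Type*} {l : List ι} {f g : ι → ℕ}
    (h : ∀ i ∈ l, f i = 0 ∨ f i < g i) :
    (l.map f).sum = 0 ∨ (l.map f).sum < (l.map g).sum := by
  by_cases hzero : ∀ i ∈ l, f i = 0
  · exact Or.inl (sum_eq_zero (by simpa using hzero))
  push Not at hzero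
  obtain ⟨i, hi, hfi⟩ := hzero
  refine Or.inr (sum_lt_sum f g (fun j hj => ?_) ⟨i, hi, (h i hi).resolve_left hfi⟩)
  rcases h j hj with h | h <;> omega

end List

namespace Cotree

variable {V : Type*}

@[induction_eliminator]
theorem induction_on_children {motive : Cotree V → Prop} (leaf : ∀ v, motive (.leaf v))
    (node : ∀ b ts, (∀ c ∈ ts, motive c) → motive (.node b ts)) (t : Cotree V) : motive t :=
  Cotree.rec (motive_2 := fun ts => ∀ c ∈ ts, motive c) leaf node
    (fun _ h => absurd h List.not_mem_nil)
    (fun _ _ hc hcs d hd => (List.mem_cons.1 hd).elim (· ▸ hc) (hcs d)) t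

@[simp] theorem leaves_leaf (v : V) : (leaf v).leaves = [v] := by rw [leaves]

@[simp] theorem leaves_node (b : Bool) (ts : List (Cotree V)) :
    (node b ts).leaves = ts.flatMap leaves := by
  rw [leaves]; simp

@[simp] theorem subtrees_leaf (v : V) : (leaf v).subtrees = [leaf v] := by rw [subtrees]

@[simp] theorem subtrees_node (b : Bool) (ts : List (Cotree V)) :
    (node b ts).subtrees = node b ts :: ts.flatMap subtrees := by
  rw [subtrees]; simp

theorem valid_node_iff {b : Bool} {ts : List (Cotree V)} :
    (node b ts).valid ↔
      2 ≤ ts.length ∧ ∀ t ∈ ts, t.valid ∧ ∀ b' ts', t = node b' ts' → b' ≠ b := by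
  rw [valid]
  exact and_congr_right fun _ => ⟨fun h t ht => h ⟨t, ht⟩ (List.mem_attach _ _),
    fun h t _ => h t.1 t.2⟩

theorem self_mem_subtrees (t : Cotree V) : t ∈ t.subtrees := by
  cases t <;> simp

theorem mem_subtrees_node_of_mem {b : Bool} {ts : List (Cotree V)} {c w : Cotree V}
    (hc : c ∈ ts) (hw : w ∈ c.subtrees) : w ∈ (node b ts).subtrees := by
  simp only [subtrees_node, List.mem_cons, List.mem_flatMap]
  exact Or.inr ⟨c, hc, hw⟩

theorem mem_subtrees_of_mem_children {t c : Cotree V} (hc : c ∈ t.children) :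
    c ∈ t.subtrees := by
  cases t with
  | leaf v => simp [children] at hc
  | node b ts => exact mem_subtrees_node_of_mem hc (self_mem_subtrees c)

theorem mem_subtrees_trans {r s t : Cotree V} (hst : s ∈ t.subtrees) (htr : t ∈ r.subtrees) :
    s ∈ r.subtrees := by
  induction r with
  | leaf v =>
    simp only [subtrees_leaf, List.mem_singleton] at htr
    exact htr ▸ hst
  | node b ts ih =>
    simp only [subtrees_node, List.mem_cons, List.mem_flatMap] at htr
    rcases htr with rfl | ⟨c, hc, htc⟩
    · exact hst
    · exact mem_subtrees_node_of_mem hc (ih c hc htc)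

theorem leaves_sublist_of_mem_subtrees {s t : Cotree V} (h : s ∈ t.subtrees) :
    List.Sublist s.leaves t.leaves := by
  induction t with
  | leaf v =>
    simp only [subtrees_leaf, List.mem_singleton] at h
    exact h ▸ List.Sublist.refl _
  | node b ts ih =>
    simp only [subtrees_node, List.mem_cons, List.mem_flatMap] at h
    rcases h with rfl | ⟨c, hc, hsc⟩
    · exact List.Sublist.refl _
    · rw [leaves_node, List.flatMap_def]
      exact (ih c hc hsc).trans (List.sublist_flatten_of_mem (List.mem_map_of_mem hc))

theorem leaves_subset_of_mem_subtrees {s t : Cotree V} (h : s ∈ t.subtrees) :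
    s.leaves ⊆ t.leaves :=
  (leaves_sublist_of_mem_subtrees h).subset

theorem eq_or_sizeOf_lt_of_mem_subtrees {s t : Cotree V} (h : s ∈ t.subtrees) :
    s = t ∨ sizeOf s < sizeOf t := by
  induction t with
  | leaf v => exact Or.inl (by simpa using h)
  | node b ts ih =>
    simp only [subtrees_node, List.mem_cons, List.mem_flatMap] at h
    rcases h with rfl | ⟨c, hc, hsc⟩
    · exact Or.inl rfl
    · have := List.sizeOf_lt_of_mem hc
      simp only [node.sizeOf_spec]
      rcases ih c hc hsc with rfl | h <;> omega

theorem eq_of_mem_subtrees_of_mem_subtrees {s t : Cotree V} (hst : s ∈ t.subtrees)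
    (hts : t ∈ s.subtrees) : s = t := by
  rcases eq_or_sizeOf_lt_of_mem_subtrees hst with h | h
  · exact h
  · rcases eq_or_sizeOf_lt_of_mem_subtrees hts with h' | h' <;> [exact h'.symm; omega]

theorem valid_of_mem_subtrees {s t : Cotree V} (hv : t.valid) (h : s ∈ t.subtrees) :
    s.valid := by
  induction t with
  | leaf v =>
    simp only [subtrees_leaf, List.mem_singleton] at h
    exact h ▸ hv
  | node b ts ih =>
    simp only [subtrees_node, List.mem_cons, List.mem_flatMap] at h
    rcases h with rfl | ⟨c, hc, hsc⟩
    · exact hv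
    · exact ih c hc ((valid_node_iff.1 hv).2 c hc).1 hsc

theorem exists_mem_leaves {t : Cotree V} (hv : t.valid) : ∃ v, v ∈ t.leaves := by
  induction t with
  | leaf v => exact ⟨v, by simp⟩
  | node b ts ih =>
    obtain ⟨hlen, hts⟩ := valid_node_iff.1 hv
    obtain ⟨c, hc⟩ := List.exists_mem_of_length_pos (by omega : 0 < ts.length)
    obtain ⟨v, hv⟩ := ih c hc (hts c hc).1
    exact ⟨v, by simpa using ⟨c, hc, hv⟩⟩

theorem nodup_leaves_of_mem_subtrees {s t : Cotree V} (hnd : t.leaves.Nodup)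
    (h : s ∈ t.subtrees) : s.leaves.Nodup :=
  hnd.sublist (leaves_sublist_of_mem_subtrees h)

theorem eq_of_mem_leaves_of_mem_leaves {b : Bool} {ts : List (Cotree V)}
    (hnd : (node b ts).leaves.Nodup) {c c' : Cotree V} (hc : c ∈ ts) (hc' : c' ∈ ts) {y : V}
    (hy : y ∈ c.leaves) (hy' : y ∈ c'.leaves) : c = c' := by
  by_contra hne
  rw [leaves_node, List.nodup_flatMap] at hnd
  have : Std.Symm (Function.onFun List.Disjoint (leaves : Cotree V → List V)) :=
    ⟨fun _ _ h => List.Disjoint.symm h⟩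
  exact hnd.2.forall hc hc' hne hy hy'

theorem child_eq_of_mem_subtrees {b : Bool} {ts : List (Cotree V)}
    (hnd : (node b ts).leaves.Nodup) {c c' u : Cotree V} (hu : u.valid) (hc : c ∈ ts)
    (hc' : c' ∈ ts) (huc : u ∈ c.subtrees) (huc' : u ∈ c'.subtrees) : c = c' := by
  obtain ⟨y, hy⟩ := exists_mem_leaves hu
  exact eq_of_mem_leaves_of_mem_leaves hnd hc hc' (leaves_subset_of_mem_subtrees huc hy)
    (leaves_subset_of_mem_subtrees huc' hy)

theorem nodup_children {b : Bool} {ts : List (Cotree V)} (hv : (node b ts).valid)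
    (hnd : (node b ts).leaves.Nodup) : ts.Nodup := by
  rw [leaves_node, List.nodup_flatMap] at hnd
  refine hnd.2.imp_of_mem fun {c c'} hc _ hdisj hcc' => ?_
  obtain ⟨y, hy⟩ := exists_mem_leaves ((valid_node_iff.1 hv).2 c hc).1
  exact hdisj hy (hcc' ▸ hy)

theorem exists_mem_leaves_not_mem_leaves {b : Bool} {ts : List (Cotree V)}
    (hv : (node b ts).valid) (hnd : (node b ts).leaves.Nodup) {c : Cotree V} (hc : c ∈ ts) :
    ∃ y ∈ (node b ts).leaves, y ∉ c.leaves := by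
  classical
  obtain ⟨hlen, hts⟩ := valid_node_iff.1 hv
  obtain ⟨c', hc', hne⟩ := Finset.exists_mem_ne (s := ts.toFinset)
    (by rwa [List.toFinset_card_of_nodup (nodup_children hv hnd)]) c
  rw [List.mem_toFinset] at hc'
  obtain ⟨y, hy⟩ := exists_mem_leaves (hts c' hc').1
  exact ⟨y, by simpa using ⟨c', hc', hy⟩,
    fun h => hne (eq_of_mem_leaves_of_mem_leaves hnd hc' hc hy h)⟩

theorem mem_subtrees_or_mem_subtrees {t w s : Cotree V} (hnd : t.leaves.Nodup)
    (hw : w ∈ t.subtrees) (hs : s ∈ t.subtrees) {y : V} (hyw : y ∈ w.leaves)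
    (hys : y ∈ s.leaves) : w ∈ s.subtrees ∨ s ∈ w.subtrees := by
  induction t with
  | leaf v =>
    simp only [subtrees_leaf, List.mem_singleton] at hw hs
    exact Or.inl (hw ▸ hs ▸ self_mem_subtrees _)
  | node b ts ih =>
    simp only [subtrees_node, List.mem_cons, List.mem_flatMap] at hw hs
    rcases hw with rfl | ⟨c, hc, hwc⟩
    · exact Or.inr (by simpa using hs)
    rcases hs with rfl | ⟨c', hc', hsc'⟩
    · exact Or.inl (mem_subtrees_node_of_mem hc hwc)
    obtain rfl := eq_of_mem_leaves_of_mem_leaves hnd hc hc'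
      (leaves_subset_of_mem_subtrees hwc hyw) (leaves_subset_of_mem_subtrees hsc' hys)
    exact ih c hc (nodup_leaves_of_mem_subtrees hnd (mem_subtrees_node_of_mem hc
      (self_mem_subtrees c))) hwc hsc'

def ancestors (t u : Cotree V) : Set (Cotree V) := {w | w ∈ t.subtrees ∧ u ∈ w.subtrees}

theorem ancestors_finite (t u : Cotree V) : (ancestors t u).Finite :=
  t.subtrees.finite_setOf_mem_and _

theorem ancestors_self (u : Cotree V) : ancestors u u = {u} :=
  Set.ext fun w => ⟨fun hw => eq_of_mem_subtrees_of_mem_subtrees hw.1 hw.2,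
    by rintro rfl; exact ⟨self_mem_subtrees w, self_mem_subtrees w⟩⟩

theorem ancestors_node_subset {b : Bool} {ts : List (Cotree V)} {c u : Cotree V}
    (hnd : (node b ts).leaves.Nodup) (hu : u.valid) (hc : c ∈ ts) (huc : u ∈ c.subtrees) :
    ancestors (node b ts) u ⊆ insert (node b ts) (ancestors c u) := by
  rintro w ⟨hw, huw⟩
  simp only [subtrees_node, List.mem_cons, List.mem_flatMap] at hw
  rcases hw with rfl | ⟨c', hc', hwc'⟩
  · exact Set.mem_insert _ _
  obtain rfl := child_eq_of_mem_subtrees hnd hu hc hc' huc (mem_subtrees_trans huw hwc')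
  exact Set.mem_insert_of_mem _ ⟨hwc', huw⟩

theorem ncard_leaves_mem_le_of_mem_subtrees (N : Set V) {s t : Cotree V}
    (h : s ∈ t.subtrees) :
    {v | v ∈ s.leaves ∧ v ∈ N}.ncard ≤ {v | v ∈ t.leaves ∧ v ∈ N}.ncard :=
  Set.ncard_le_ncard (fun _ hv => ⟨leaves_subset_of_mem_subtrees h hv.1, hv.2⟩)
    (t.leaves.finite_setOf_mem_and _)

theorem ncard_leaves_mem_lt_of_mem_subtrees {N : Set V} {s t : Cotree V}
    (h : s ∈ t.subtrees) {y : V} (hyt : y ∈ t.leaves) (hys : y ∉ s.leaves) (hyN : y ∈ N) :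
    {v | v ∈ s.leaves ∧ v ∈ N}.ncard < {v | v ∈ t.leaves ∧ v ∈ N}.ncard := by
  rw [← Nat.add_one_le_iff,
    ← Set.ncard_insert_of_notMem (fun h => hys h.1) (s.leaves.finite_setOf_mem_and _)]
  exact Set.ncard_le_ncard (Set.insert_subset ⟨hyt, hyN⟩
    fun _ hv => ⟨leaves_subset_of_mem_subtrees h hv.1, hv.2⟩) (t.leaves.finite_setOf_mem_and _)

theorem isSeries_or_eq_of_parallel_child {ts : List (Cotree V)} (hv : (node false ts).valid)
    {c u : Cotree V} (hc : c ∈ ts) (huc : u ∈ c.subtrees) : c.isSeries ∨ c = u := by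
  cases c with
  | leaf w =>
    simp only [subtrees_leaf, List.mem_singleton] at huc
    exact Or.inr huc.symm
  | node b ts' =>
    have := ((valid_node_iff.1 hv).2 _ hc).2 b ts' rfl
    simp only [ne_eq, Bool.not_eq_false] at this
    subst this
    exact Or.inl trivial

-- The second conjunct strengthens the induction: below a parallel ancestor the path continues
-- through a series node or ends at `u`.
theorem ncard_ancestors_le {t u : Cotree V} {N : Set V} (hv : t.valid) (hnd : t.leaves.Nodup)
    (hu : u ∈ t.subtrees)
    (hseries : ∀ a ∈ t.subtrees, a.isSeries → ∀ c ∈ a.children, u ∈ c.subtrees →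
      ∃ y ∈ a.leaves, y ∉ c.leaves ∧ y ∈ N) :
    (ancestors t u).ncard ≤ 2 * {v | v ∈ t.leaves ∧ v ∈ N}.ncard + 2 ∧
      (t.isSeries ∨ t = u →
        (ancestors t u).ncard ≤ 2 * {v | v ∈ t.leaves ∧ v ∈ N}.ncard + 1) := by
  induction t with
  | leaf v =>
    obtain rfl : u = leaf v := by simpa using hu
    rw [ancestors_self, Set.ncard_singleton]
    omega
  | node b ts ih =>
    by_cases htu : node b ts = u
    · subst htu
      rw [ancestors_self, Set.ncard_singleton]
      omega
    obtain ⟨c, hc, huc⟩ : ∃ c ∈ ts, u ∈ c.subtrees := by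
      simpa [Ne.symm htu] using hu
    have hvc := ((valid_node_iff.1 hv).2 c hc).1
    have hct : c ∈ (node b ts).subtrees := mem_subtrees_node_of_mem hc (self_mem_subtrees c)
    obtain ⟨ih₁, ih₂⟩ := ih c hc hvc (nodup_leaves_of_mem_subtrees hnd hct) huc
      fun a ha => hseries a (mem_subtrees_trans ha hct)
    have hA : (ancestors (node b ts) u).ncard ≤ (ancestors c u).ncard + 1 :=
      (Set.ncard_le_ncard (ancestors_node_subset hnd (valid_of_mem_subtrees hvc huc) hc huc)
        ((ancestors_finite c u).insert _)).trans (Set.ncard_insert_le _ _)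
    cases b with
    | false =>
      have := ncard_leaves_mem_le_of_mem_subtrees N hct
      have := ih₂ (isSeries_or_eq_of_parallel_child hv hc huc)
      refine ⟨by omega, ?_⟩
      rintro (h | h)
      · exact h.elim
      · exact absurd h htu
    | true =>
      obtain ⟨y, hy, hyc, hyN⟩ := hseries _ (self_mem_subtrees _) trivial c hc huc
      have := ncard_leaves_mem_lt_of_mem_subtrees hct hy hyc hyN
      constructor <;> omega

theorem countP_full_subtrees_eq_zero_or_lt (N : Set V) [DecidablePred (· ∈ N)]
    [DecidablePred (full N)] {t : Cotree V} (hv : t.valid) :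
    t.subtrees.countP (full N ·) = 0 ∨
      t.subtrees.countP (full N ·) < 2 * t.leaves.countP (· ∈ N) := by
  induction t with
  | leaf v => by_cases hv : v ∈ N <;> simp [full, hv]
  | node b ts ih =>
    obtain ⟨hlen, hts⟩ := valid_node_iff.1 hv
    set F : Cotree V → ℕ := fun c => c.subtrees.countP (full N ·)
    set K : Cotree V → ℕ := fun c => c.leaves.countP (· ∈ N)
    have ih' : ∀ c ∈ ts, F c = 0 ∨ F c < 2 * K c := fun c hc => ih c hc (hts c hc).1
    have hF : F (node b ts) = (ts.map F).sum + if full N (node b ts) then 1 else 0 := by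
      simp only [F, subtrees_node]
      rw [List.countP_cons, List.countP_flatMap]
      simp [Function.comp_def]
    have hK : K (node b ts) = (ts.map K).sum := by
      simp [K, List.countP_flatMap, Function.comp_def]
    have h2K : (ts.map fun c => 2 * K c).sum = 2 * (ts.map K).sum := List.sum_map_mul_left _ _ _
    show F (node b ts) = 0 ∨ F (node b ts) < 2 * K (node b ts)
    rw [hF, hK]
    by_cases hf : full N (node b ts)
    · have hchild : ∀ c ∈ ts, F c + 1 ≤ 2 * K c := by
        intro c hc
        have hFc : F c ≠ 0 := by
          refine List.countP_pos_iff.2 ⟨c, self_mem_subtrees c, ?_⟩ |>.ne'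
          exact decide_eq_true fun v hv => hf v (by simpa using ⟨c, hc, hv⟩)
        exact (ih' c hc).resolve_left hFc
      have := List.sum_le_sum hchild
      simp only [List.sum_map_add, List.map_const', List.sum_replicate, smul_eq_mul, mul_one,
        h2K] at this
      simp only [hf, if_true]
      omega
    · simp only [hf, if_false, add_zero]
      exact h2K ▸ List.sum_map_eq_zero_or_lt ih'

theorem IsLcaNodeLeaf.of_mem_leaves {T a u w : Cotree V} {y z : V} (hnd : T.leaves.Nodup)
    (hlca : IsLcaNodeLeaf T a u z) (hw : w ∈ T.subtrees) (huw : u ∉ w.subtrees)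
    (hzw : z ∈ w.leaves) (hyw : y ∈ w.leaves) : IsLcaNodeLeaf T a u y := by
  obtain ⟨ha, hua, hza, hmin⟩ := hlca
  have hwa : w ∈ a.subtrees := (mem_subtrees_or_mem_subtrees hnd hw ha hzw hza).resolve_right
    fun haw => huw (mem_subtrees_trans hua haw)
  refine ⟨ha, hua, leaves_subset_of_mem_subtrees hwa hyw, fun c hc ⟨huc, hyc⟩ => ?_⟩
  have hcT : c ∈ T.subtrees := mem_subtrees_trans (mem_subtrees_of_mem_children hc) ha
  have hwc : w ∈ c.subtrees := (mem_subtrees_or_mem_subtrees hnd hw hcT hyw hyc).resolve_right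
    fun hcw => huw (mem_subtrees_trans huc hcw)
  exact hmin c hc ⟨huc, leaves_subset_of_mem_subtrees hwc hzw⟩

namespace IsInsertionNode

variable {T u : Cotree V} {N : Set V}

theorem full_of_not_hollow (hins : IsInsertionNode T N u) (hnd : T.leaves.Nodup)
    {w : Cotree V} (hw : w ∈ T.subtrees) (huw : u ∉ w.subtrees) (hnh : ¬ hollow N w) :
    full N w := by
  obtain ⟨huT, -, hchild, hiff⟩ := hins
  obtain ⟨z, hzw, hzN⟩ : ∃ z ∈ w.leaves, z ∈ N := by simpa [hollow] using hnh
  by_cases hwu : w ∈ u.subtrees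
  · cases u with
    | leaf v =>
      simp only [subtrees_leaf, List.mem_singleton] at hwu
      exact absurd (hwu ▸ self_mem_subtrees w) huw
    | node b ts =>
      simp only [subtrees_node, List.mem_cons, List.mem_flatMap] at hwu
      rcases hwu with rfl | ⟨c, hc, hwc⟩
      · exact absurd (self_mem_subtrees _) huw
      rcases hchild c hc with hfull | hhollow
      · exact fun y hy => hfull y (leaves_subset_of_mem_subtrees hwc hy)
      · exact absurd hzN (hhollow z (leaves_subset_of_mem_subtrees hwc hzw))
  · have hdisj : ∀ y ∈ w.leaves, y ∉ u.leaves := fun y hy hyu =>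
      (mem_subtrees_or_mem_subtrees hnd hw huT hy hyu).elim hwu huw
    obtain ⟨a, hlca, has⟩ :=
      (hiff z (leaves_subset_of_mem_subtrees hw hzw) (hdisj z hzw)).1 hzN
    exact fun y hy => (hiff y (leaves_subset_of_mem_subtrees hw hy) (hdisj y hy)).2
      ⟨a, hlca.of_mem_leaves hnd hw huw hzw hy, has⟩

theorem exists_mem_leaves_of_isSeries (hins : IsInsertionNode T N u) (hv : T.valid)
    (hnd : T.leaves.Nodup) {a c : Cotree V} (ha : a ∈ T.subtrees) (has : a.isSeries)
    (hc : c ∈ a.children) (huc : u ∈ c.subtrees) :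
    ∃ y ∈ a.leaves, y ∉ c.leaves ∧ y ∈ N := by
  obtain ⟨huT, -, -, hiff⟩ := hins
  rcases a with v | ⟨b, ts⟩
  · exact has.elim
  have hnda := nodup_leaves_of_mem_subtrees hnd ha
  obtain ⟨y, hya, hyc⟩ := exists_mem_leaves_not_mem_leaves (valid_of_mem_subtrees hv ha) hnda hc
  have hyu : y ∉ u.leaves := fun hyu => hyc (leaves_subset_of_mem_subtrees huc hyu)
  refine ⟨y, hya, hyc, (hiff y (leaves_subset_of_mem_subtrees ha hya) hyu).2
    ⟨node b ts, ⟨ha, mem_subtrees_node_of_mem hc huc, hya, ?_⟩, has⟩⟩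
  rintro c' hc' ⟨huc', hyc'⟩
  obtain rfl := child_eq_of_mem_subtrees hnda (valid_of_mem_subtrees hv huT) hc' hc huc' huc
  exact hyc hyc'

end IsInsertionNode

end Cotree

theorem stmt_19 :
    ∃ C : ℕ, ∀ (V : Type) (T : Cotree V) (Nx N' : Set V) (u : Cotree V),
      T.valid → T.leaves.Nodup → (∀ v ∈ Nx, v ∈ T.leaves) → Cotree.mixed Nx T →
      Cotree.IsConstrainedCompletion T Nx N' → Cotree.IsInsertionNode T N' u →
      {w : Cotree V | w ∈ T.subtrees ∧ ¬ Cotree.hollow Nx w}.ncard ≤ C * N'.ncard := by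
  refine ⟨5, fun V T Nx N' u hv hnd _ hmix hcc hins => ?_⟩
  classical
  obtain ⟨hsub, hN'T, -⟩ := hcc
  have hN' : {v | v ∈ T.leaves ∧ v ∈ N'} = N' :=
    Set.ext fun v => ⟨And.right, fun hv => ⟨hN'T v hv, hv⟩⟩
  have hpos : 0 < N'.ncard := by
    obtain ⟨z, -, hz⟩ : ∃ z ∈ T.leaves, z ∈ Nx := by
      simpa [Cotree.hollow] using fun h => hmix (Or.inr h)
    exact (Set.ncard_pos ((List.finite_toSet T.leaves).subset hN'T)).2 ⟨z, hsub hz⟩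
  have hsplit : {w | w ∈ T.subtrees ∧ ¬ Cotree.hollow Nx w} ⊆
      T.ancestors u ∪ {w | w ∈ T.subtrees ∧ Cotree.full N' w} := by
    rintro w ⟨hw, hnh⟩
    by_cases huw : u ∈ w.subtrees
    · exact Or.inl ⟨hw, huw⟩
    · exact Or.inr ⟨hw, hins.full_of_not_hollow hnd hw huw
        fun h => hnh fun v hv hvNx => h v hv (hsub hvNx)⟩
  have hanc := (Cotree.ncard_ancestors_le hv hnd hins.1
    fun a ha has c hc huc => hins.exists_mem_leaves_of_isSeries hv hnd ha has hc huc).1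
  have hfull := T.subtrees.ncard_setOf_mem_and_le_countP (Cotree.full N')
  have hleaves := hnd.ncard_setOf_mem_and (· ∈ N')
  rw [hN'] at hanc hleaves
  calc _ ≤ (T.ancestors u).ncard + {w | w ∈ T.subtrees ∧ Cotree.full N' w}.ncard :=
        (Set.ncard_le_ncard hsplit ((Cotree.ancestors_finite T u).union
          (T.subtrees.finite_setOf_mem_and _))).trans (Set.ncard_union_le _ _)
    _ ≤ 5 * N'.ncard := by
      rcases Cotree.countP_full_subtrees_eq_zero_or_lt N' hv with h | h <;> omega
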